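/- Let n ≥ 1 and let a, b, c, d ∈ {1,…,n} be pairwise distinct. Then, as words over 𝒢_n, H_{a,b} H_{a,c} H_{b,d} H_{c,d} H_{b,d} H_{a,c} H_{a,b} ≈ H_{a,c} H_{b,d} H_{a,b} H_{b,d} H_{a,c}. -/

import Mathlib

/-!
Write `A = H_{a,b}`, `B = H_{a,c}`, `C = H_{b,d}`, `D = H_{c,d}`. Since `B` and `C` commute,
`P = B C` is an involution, and the two sides are `A P D P A` and `P A P`. Relation (d3) reads
`(D P)⁴ = A D`; as `A` and `D` are commuting involutions, `r = D P` satisfies `r⁸ = 1` and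
`A = r⁴ D`. So everything happens in the dihedral group generated by `D` and `P`, where both
sides equal `r² D`.
-/

open Matrix

noncomputable section

/-- `Z_a`: identity matrix except entry `(a,a)` is `-1`. -/
def Zmat (n : ℕ) (a : Fin n) : Matrix (Fin n) (Fin n) ℝ :=
  fun i j => if i = j then (if i = a then -1 else 1) else 0

/-- `X_{b,c}`: the permutation matrix exchanging the `b`-th and `c`-th
standard basis vectors. -/
def Xmat (n : ℕ) (b c : Fin n) : Matrix (Fin n) (Fin n) ℝ :=
  fun i j => if j = Equiv.swap b c i then 1 else 0

/-- `H_{b,c}`: identity except entries `(b,b), (b,c), (c,b)` equal `1/√2`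
and entry `(c,c)` equals `-1/√2`. -/
def Hmat (n : ℕ) (b c : Fin n) : Matrix (Fin n) (Fin n) ℝ :=
  fun i j =>
    if i = b ∧ j = b then 1 / Real.sqrt 2
    else if i = b ∧ j = c then 1 / Real.sqrt 2
    else if i = c ∧ j = b then 1 / Real.sqrt 2
    else if i = c ∧ j = c then -(1 / Real.sqrt 2)
    else if i = j then 1 else 0

/-- Generators of `𝒢_n`. -/
inductive Gen (n : ℕ) : Type
  | Z : Fin n → Gen n
  | X : (b c : Fin n) → b ≠ c → Gen n
  | H : (b c : Fin n) → b ≠ c → Gen n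

/-- Semantics of a generator. -/
def gsem {n : ℕ} : Gen n → Matrix (Fin n) (Fin n) ℝ
  | Gen.Z a => Zmat n a
  | Gen.X b c _ => Xmat n b c
  | Gen.H b c _ => Hmat n b c

/-- Semantics of a word (rightmost generator acts first). -/
def wsem {n : ℕ} : List (Gen n) → Matrix (Fin n) (Fin n) ℝ
  | [] => 1
  | g :: w => gsem g * wsem w

/-- The smallest congruence `≈` on words over `𝒢_n` containing the relations
(a1)-(d4), (e1), (e2) of the paper. -/
inductive WRel (n : ℕ) : List (Gen n) → List (Gen n) → Prop
  | rel_zz (a : Fin n) : WRel n [Gen.Z a, Gen.Z a] []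
  | rel_xx (a b : Fin n) (hab : a ≠ b) : WRel n [Gen.X a b hab, Gen.X a b hab] []
  | rel_hh (a b : Fin n) (hab : a ≠ b) : WRel n [Gen.H a b hab, Gen.H a b hab] []
  | rel_zz_comm (a b : Fin n) (hab : a ≠ b) : WRel n [Gen.Z a, Gen.Z b] [Gen.Z b, Gen.Z a]
  | rel_zx_comm (a b c : Fin n) (hab : a ≠ b) (hac : a ≠ c) (hbc : b ≠ c) :
      WRel n [Gen.Z a, Gen.X b c hbc] [Gen.X b c hbc, Gen.Z a]
  | rel_xx_comm (a b c d : Fin n) (hab : a ≠ b) (hac : a ≠ c) (had : a ≠ d)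
      (hbc : b ≠ c) (hbd : b ≠ d) (hcd : c ≠ d) :
      WRel n [Gen.X a b hab, Gen.X c d hcd] [Gen.X c d hcd, Gen.X a b hab]
  | rel_zh_comm (a b c : Fin n) (hab : a ≠ b) (hac : a ≠ c) (hbc : b ≠ c) :
      WRel n [Gen.Z a, Gen.H b c hbc] [Gen.H b c hbc, Gen.Z a]
  | rel_xh_comm (a b c d : Fin n) (hab : a ≠ b) (hac : a ≠ c) (had : a ≠ d)
      (hbc : b ≠ c) (hbd : b ≠ d) (hcd : c ≠ d) :
      WRel n [Gen.X a b hab, Gen.H c d hcd] [Gen.H c d hcd, Gen.X a b hab]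
  | rel_hh_comm (a b c d : Fin n) (hab : a ≠ b) (hac : a ≠ c) (had : a ≠ d)
      (hbc : b ≠ c) (hbd : b ≠ d) (hcd : c ≠ d) :
      WRel n [Gen.H a b hab, Gen.H c d hcd] [Gen.H c d hcd, Gen.H a b hab]
  | rel_zx (a b : Fin n) (hab : a ≠ b) :
      WRel n [Gen.Z a, Gen.X a b hab] [Gen.X a b hab, Gen.Z b]
  | rel_xc2 (a b c : Fin n) (hab : a ≠ b) (hac : a ≠ c) (hbc : b ≠ c) :
      WRel n [Gen.X b c hbc, Gen.X a b hab] [Gen.X a b hab, Gen.X a c hac]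
  | rel_xc3 (a b c : Fin n) (hab : a ≠ b) (hac : a ≠ c) (hbc : b ≠ c) :
      WRel n [Gen.X a c hac, Gen.X b c hbc] [Gen.X b c hbc, Gen.X a b hab]
  | rel_hx4 (a b c : Fin n) (hab : a ≠ b) (hac : a ≠ c) (hbc : b ≠ c) :
      WRel n [Gen.H b c hbc, Gen.X a b hab] [Gen.X a b hab, Gen.H a c hac]
  | rel_hx5 (a b c : Fin n) (hab : a ≠ b) (hac : a ≠ c) (hbc : b ≠ c) :
      WRel n [Gen.H a c hac, Gen.X b c hbc] [Gen.X b c hbc, Gen.H a b hab]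
  | rel_zzh (a b : Fin n) (hab : a ≠ b) :
      WRel n [Gen.Z a, Gen.Z b, Gen.H a b hab] [Gen.H a b hab, Gen.Z a, Gen.Z b]
  | rel_zh (a b : Fin n) (hab : a ≠ b) :
      WRel n [Gen.Z b, Gen.H a b hab] [Gen.H a b hab, Gen.X a b hab]
  | rel_d3 (a b c d : Fin n) (hab : a ≠ b) (hac : a ≠ c) (had : a ≠ d)
      (hbc : b ≠ c) (hbd : b ≠ d) (hcd : c ≠ d) :
      WRel n
        ([Gen.H c d hcd, Gen.H a c hac, Gen.H b d hbd] ++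
         [Gen.H c d hcd, Gen.H a c hac, Gen.H b d hbd] ++
         [Gen.H c d hcd, Gen.H a c hac, Gen.H b d hbd] ++
         [Gen.H c d hcd, Gen.H a c hac, Gen.H b d hbd])
        [Gen.H a b hab, Gen.H c d hcd]
  | rel_d4 (a b c d e f : Fin n) (hab : a ≠ b) (hac : a ≠ c) (had : a ≠ d)
      (hae : a ≠ e) (haf : a ≠ f) (hbc : b ≠ c) (hbd : b ≠ d) (hbe : b ≠ e)
      (hbf : b ≠ f) (hcd : c ≠ d) (hce : c ≠ e) (hcf : c ≠ f) (hde : d ≠ e)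
      (hdf : d ≠ f) (hef : e ≠ f) :
      WRel n
        ([Gen.H a c hac, Gen.H b d hbd, Gen.H a b hab, Gen.H a c hac,
          Gen.H b d hbd, Gen.X c e hce, Gen.X d f hdf] ++
         [Gen.H a c hac, Gen.H b d hbd, Gen.H a b hab, Gen.H a c hac,
          Gen.H b d hbd, Gen.X c e hce, Gen.X d f hdf] ++
         [Gen.H a c hac, Gen.H b d hbd, Gen.H a b hab, Gen.H a c hac,
          Gen.H b d hbd, Gen.X c e hce, Gen.X d f hdf])
        [Gen.H c e hce, Gen.H d f hdf, Gen.H e f hef, Gen.H c e hce,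
         Gen.H d f hdf, Gen.X c e hce, Gen.X d f hdf]
  | rel_x_swap (b c : Fin n) (hbc : b ≠ c) :
      WRel n [Gen.X c b (Ne.symm hbc)] [Gen.X b c hbc]
  | rel_h_swap (b c : Fin n) (hbc : b ≠ c) :
      WRel n [Gen.H c b (Ne.symm hbc)] [Gen.X b c hbc, Gen.H b c hbc, Gen.X b c hbc]
  | refl (w : List (Gen n)) : WRel n w w
  | symm {u v : List (Gen n)} : WRel n u v → WRel n v u
  | trans {u v w : List (Gen n)} : WRel n u v → WRel n v w → WRel n u w
  | append_left (w : List (Gen n)) {u v : List (Gen n)} :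
      WRel n u v → WRel n (w ++ u) (w ++ v)
  | append_right (w : List (Gen n)) {u v : List (Gen n)} :
      WRel n u v → WRel n (u ++ w) (v ++ w)

/-- Membership in the ring `ℤ[√2] ⊆ ℝ`. -/
def inZsqrt2 (x : ℝ) : Prop := ∃ a b : ℤ, x = (a : ℝ) + (b : ℝ) * Real.sqrt 2

/-- Membership in the ring `ℤ[1/√2] ⊆ ℝ`. -/
def inZinvsqrt2 (x : ℝ) : Prop := ∃ k : ℕ, inZsqrt2 (Real.sqrt 2 ^ k * x)

/-- `u ≡ v (mod 2)`, i.e. `(u - v)/2 ∈ ℤ[√2]`. -/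
def cong2 (u v : ℝ) : Prop := inZsqrt2 ((u - v) / 2)

/-- Least denominator exponent of a scalar. -/
def lde (x : ℝ) : ℕ := sInf {k : ℕ | inZsqrt2 (Real.sqrt 2 ^ k * x)}

/-- Least denominator exponent of a vector. -/
def ldeVec {m : ℕ} (v : Fin m → ℝ) : ℕ :=
  sInf {k : ℕ | ∀ i, inZsqrt2 (Real.sqrt 2 ^ k * v i)}

/-- The largest (1-based) index `j` such that the `j`-th column of `M` differs
from the `j`-th standard basis vector (`0` if `M` is the identity). -/
def levelJ {n : ℕ} (M : Matrix (Fin n) (Fin n) ℝ) : ℕ :=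
  sSup {m : ℕ | ∃ i : Fin n, m = (i : ℕ) + 1 ∧
    ∃ r : Fin n, M r i ≠ (if r = i then (1 : ℝ) else 0)}

/-- The `levelJ M`-th column of `M` (junk if `n = 0`). -/
def levelCol {n : ℕ} (M : Matrix (Fin n) (Fin n) ℝ) : Fin n → ℝ :=
  fun r => if h : levelJ M - 1 < n then M r ⟨levelJ M - 1, h⟩ else 0

/-- The level `(j, k, l)` of a matrix, as an element of `ℕ ×ₗ (ℕ ×ₗ ℕ)`
(lexicographic order). -/
def level {n : ℕ} (M : Matrix (Fin n) (Fin n) ℝ) : ℕ ×ₗ (ℕ ×ₗ ℕ) :=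
  if levelJ M = 0 then toLex (0, toLex (0, 0))
  else if ldeVec (levelCol M) = 0 then toLex (levelJ M, toLex (0, 0))
  else
    toLex (levelJ M, toLex (ldeVec (levelCol M),
      Nat.card {i : Fin n //
        cong2 (Real.sqrt 2 ^ ldeVec (levelCol M) * levelCol M i) 1 ∨
        cong2 (Real.sqrt 2 ^ ldeVec (levelCol M) * levelCol M i) (1 + Real.sqrt 2)}))

/-- The level of the sequence of intermediate states obtained by applying the
generators of a word (rightmost first) to a state `s`: the maximum of the
levels of all intermediate states. -/
def seqLevel {n : ℕ} : List (Gen n) → Matrix (Fin n) (Fin n) ℝ → ℕ ×ₗ (ℕ ×ₗ ℕ)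
  | [], s => level s
  | g :: w, s => max (level (gsem g * (wsem w * s))) (seqLevel w s)

/-- The basic generators `𝒢'_n = {X_{1,x} : 2 ≤ x ≤ n} ∪ {Z_1, H_{1,2}}`
(written with 1-based indices). -/
def Gen.isBasic {n : ℕ} : Gen n → Prop
  | Gen.Z a => (a : ℕ) = 0
  | Gen.X b _ _ => (b : ℕ) = 0
  | Gen.H b c _ => (b : ℕ) = 0 ∧ (c : ℕ) = 1

/-- A generator with ordered indices (`b < c` for `X_{b,c}` and `H_{b,c}`). -/
def Gen.ordered {n : ℕ} : Gen n → Prop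
  | Gen.Z _ => True
  | Gen.X b c _ => b < c
  | Gen.H b c _ => b < c


section Dihedral

variable {M : Type*} [Monoid M]

theorem pow_mul_mul_pow_eq_self {r d : M} (h : r * d * r = d) (k : ℕ) :
    r ^ k * d * r ^ k = d := by
  induction k with
  | zero => simp
  | succ k ih =>
    nth_rw 1 [pow_succ']
    rw [pow_succ, ← mul_assoc, mul_assoc r, mul_assoc r, ih, h]

theorem mul_mul_mul_mul_eq_mul_mul_of_dihedral {a d p : M} (hd : d * d = 1) (hp : p * p = 1)
    (ha : a * a = 1) (had : a * d = d * a) (h : (d * p) ^ 4 = a * d) :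
    a * p * d * p * a = p * a * p := by
  set r := d * p with hr
  have hdd (x : M) : d * (d * x) = x := by rw [← mul_assoc, hd, one_mul]
  have hp_eq : p = d * r := (hdd p).symm
  have ha_eq : a = r ^ 4 * d := by rw [h, mul_assoc, hd, mul_one]
  have hr8 : r ^ 8 = 1 := by
    rw [show 8 = 4 + 4 from rfl, pow_add, h, mul_assoc, ← mul_assoc d, ← had, ← mul_assoc,
      ← mul_assoc, ha, one_mul, hd]
  have hrdr : r * d * r = d := by rw [hr, mul_assoc, hdd, mul_assoc, hp, mul_one]
  calc a * p * d * p * a = r ^ 8 * (r ^ 2 * d) := by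
        rw [ha_eq, hp_eq]
        simp only [pow_succ, pow_zero, one_mul, mul_assoc, hdd]
    _ = r ^ 2 * (r ^ 6 * d * r ^ 6) := by rw [hr8, one_mul, pow_mul_mul_pow_eq_self hrdr]
    _ = r ^ 8 * (d * r ^ 6) := by simp only [pow_succ, pow_zero, one_mul, mul_assoc]
    _ = p * a * p := by
        rw [hr8, one_mul, ha_eq, hp_eq]
        simp only [pow_succ, pow_zero, one_mul, mul_assoc, hdd]

end Dihedral

section WordMonoid

variable {n : ℕ}

def wordCon (n : ℕ) : Con (FreeMonoid (Gen n)) where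
  r u v := WRel n u.toList v.toList
  iseqv := ⟨fun _ => .refl _, .symm, .trans⟩
  mul' h₁ h₂ := (h₁.append_right _).trans (h₂.append_left _)

def wordClass (w : List (Gen n)) : (wordCon n).Quotient :=
  (wordCon n).mk' (FreeMonoid.ofList w)

def genClass (g : Gen n) : (wordCon n).Quotient :=
  (wordCon n).mk' (FreeMonoid.of g)

theorem wordClass_eq_iff {u v : List (Gen n)} : wordClass u = wordClass v ↔ WRel n u v :=
  (wordCon n).eq

theorem wordClass_nil : wordClass ([] : List (Gen n)) = 1 := map_one _

theorem wordClass_cons (g : Gen n) (w : List (Gen n)) :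
    wordClass (g :: w) = genClass g * wordClass w := by
  simp only [wordClass, genClass, FreeMonoid.ofList_cons, map_mul]

end WordMonoid

theorem prop_h0_general (n : ℕ) (a b c d : Fin n)
    (hab : a ≠ b) (hac : a ≠ c) (had : a ≠ d)
    (hbc : b ≠ c) (hbd : b ≠ d) (hcd : c ≠ d) :
    WRel n
      [Gen.H a b hab, Gen.H a c hac, Gen.H b d hbd, Gen.H c d hcd, Gen.H b d hbd, Gen.H a c hac, Gen.H a b hab]
      [Gen.H a c hac, Gen.H b d hbd, Gen.H a b hab, Gen.H b d hbd, Gen.H a c hac] := by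
  have hH (x y : Fin n) (hxy : x ≠ y) := wordClass_eq_iff.2 (WRel.rel_hh x y hxy)
  have hBC := wordClass_eq_iff.2 (WRel.rel_hh_comm b d a c hbd hab.symm hbc had.symm hcd.symm hac)
  have hAD := wordClass_eq_iff.2 (WRel.rel_hh_comm a b c d hab hac had hbc hbd hcd)
  have hd3 := wordClass_eq_iff.2 (WRel.rel_d3 a b c d hab hac had hbc hbd hcd)
  simp only [List.cons_append, List.nil_append, wordClass_cons, wordClass_nil, mul_one] at hH hBC hAD hd3
  set A := genClass (Gen.H a b hab)
  set B := genClass (Gen.H a c hac)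
  set C := genClass (Gen.H b d hbd)
  set D := genClass (Gen.H c d hcd)
  have hP : B * C * (B * C) = 1 :=
    calc B * C * (B * C) = B * (C * B) * C := by simp only [mul_assoc]
      _ = B * B * (C * C) := by rw [hBC]; simp only [mul_assoc]
      _ = 1 := by rw [hH, hH, one_mul]
  have hA : A * A = 1 := hH a b hab
  have hD : D * D = 1 := hH c d hcd
  have key := mul_mul_mul_mul_eq_mul_mul_of_dihedral hD hP hA hAD
    (by rw [← hd3]; simp only [pow_succ, pow_zero, one_mul, mul_assoc])
  rw [← wordClass_eq_iff]
  simp only [wordClass_cons, wordClass_nil, mul_one] at key ⊢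
  rw [hBC, ← mul_assoc C B A, hBC]
  simpa only [mul_assoc] using key

theorem prop_h0 (n : ℕ) (hn : 1 ≤ n) (a b c d : Fin n)
    (hab : a ≠ b) (hac : a ≠ c) (had : a ≠ d)
    (hbc : b ≠ c) (hbd : b ≠ d) (hcd : c ≠ d) :
    WRel n
      [Gen.H a b hab, Gen.H a c hac, Gen.H b d hbd, Gen.H c d hcd, Gen.H b d hbd, Gen.H a c hac, Gen.H a b hab]
      [Gen.H a c hac, Gen.H b d hbd, Gen.H a b hab, Gen.H b d hbd, Gen.H a c hac] :=
  prop_h0_general n a b c d hab hac had hbc hbd hcd
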